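/- Let n ≥ 1 and let p : ℝⁿ → ℝ be a multilinear polynomial of degree at most 2, i.e. p(x) = c₀ + Σ_i c_i x_i + Σ_{i<j} c_{ij} x_i x_j, such that |p(x)| ≤ 1 for every x ∈ {-1,1}ⁿ. Then there exists a real (n+1)×(n+1) matrix M such that x̃ᵀ M x̃ = p(x) for every x ∈ ℝⁿ, where x̃ := (1, x₁, …, xₙ) ∈ ℝ^{n+1}, and |yᵀ M z| ≤ 3 for all y, z ∈ {-1,1}^{n+1}. -/

import Mathlib

/-!
Homogenize `p` to the quadratic form `Q(t, x) = c₀t² + t·∑ cᵢxᵢ + ∑_{i<j} cᵢⱼxᵢxⱼ` and take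
for `M` the matrix of its symmetric bilinear form `B`, so that `x̃ᵀ M x̃ = Q(x̃) = p(x)`.
For sign vectors `y, z` put `u = (y + z)/2` and `v = (y - z)/2`: then
`yᵀ M z = B(u + v, u - v) = Q(u) - Q(v)`, and in every coordinate one of `u, v` is `±1` and
the other is `0`. Since `p` is affine in each variable, `|p| ≤ 1` extends from `{-1,1}ⁿ` to
`{-1,0,1}ⁿ`; hence `|Q(±1, x)| = |p(±x)| ≤ 1` there, and the parallelogram law
`Q(1, x) + Q(-1, x) = 2 Q(0, x) + 2 Q(1, 0)` gives `|Q(0, x)| ≤ 2`. As one of `u₀, v₀`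
vanishes, `|Q(u) - Q(v)| ≤ 2 + 1`.
-/

namespace QuadraticMap

variable {R M N : Type*} [CommRing R] [AddCommGroup M] [Module R M] [AddCommGroup N] [Module R N]

theorem map_add_add_map_sub (Q : QuadraticMap R M N) (x y : M) :
    Q (x + y) + Q (x - y) = 2 • Q x + 2 • Q y := by
  have h := Q.polar_neg_right x y
  simp only [polar, ← sub_eq_add_neg, QuadraticMap.map_neg] at h
  rw [← sub_eq_zero]
  convert sub_eq_zero.mpr h using 1
  abel

theorem associated_add_sub [Invertible (2 : R)] (Q : QuadraticMap R M N) (x y : M) :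
    associated Q (x + y) (x - y) = Q x - Q y := by
  simp only [map_add, map_sub, LinearMap.add_apply, associated_eq_self_apply,
    associated_isSymm R Q y x]
  abel

theorem map_update_one_add_map_update_neg_one {ι : Type*} [DecidableEq ι]
    (Q : QuadraticMap R (ι → R) N) (w : ι → R) (k : ι) (hk : Q (Pi.single k 1) = 0) :
    Q (Function.update w k 1) + Q (Function.update w k (-1)) = 2 • Q (Function.update w k 0) := by
  have hupdate (a : R) : Function.update w k a = Function.update w k 0 + a • Pi.single k 1 := by
    ext i; rcases eq_or_ne i k with rfl | hi <;> simp [*]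
  rw [hupdate 1, hupdate (-1), one_smul, neg_one_smul, ← sub_eq_add_neg,
    map_add_add_map_sub, hk, smul_zero, add_zero]

end QuadraticMap

theorem QuadraticForm.sum_mul_toMatrix'_mul {R n : Type*} [CommRing R] [Invertible (2 : R)]
    [Fintype n] [DecidableEq n] (Q : QuadraticForm R (n → R)) (y z : n → R) :
    ∑ i, ∑ j, y i * Q.toMatrix' i j * z j = Q.associated y z := by
  conv_rhs => rw [← Matrix.toLinearMap₂'_toMatrix' (R := R) Q.associated]
  simp only [Matrix.toLinearMap₂'_apply, smul_eq_mul, QuadraticForm.toMatrix']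
  refine Finset.sum_congr rfl fun i _ => Finset.sum_congr rfl fun j _ => ?_
  ring

theorem abs_le_of_midpoint_of_abs_le_on_signs {ι : Type*} [Fintype ι] [DecidableEq ι]
    {f : (ι → ℝ) → ℝ} {C : ℝ}
    (hf : ∀ x k, f (Function.update x k 1) + f (Function.update x k (-1))
      = 2 * f (Function.update x k 0))
    (hC : ∀ x : ι → ℝ, (∀ i, x i = 1 ∨ x i = -1) → |f x| ≤ C)
    (x : ι → ℝ) (hx : ∀ i, x i = 1 ∨ x i = -1 ∨ x i = 0) : |f x| ≤ C := by
  suffices h : ∀ s : Finset ι, ∀ x : ι → ℝ,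
      (∀ i, x i = 1 ∨ x i = -1 ∨ (i ∈ s ∧ x i = 0)) → |f x| ≤ C by
    exact h Finset.univ x fun i => by simpa using hx i
  intro s
  induction s using Finset.induction_on with
  | empty => exact fun x hx => hC x fun i => by simpa using hx i
  | insert k s _ ih =>
    intro x hx
    have hupdate : ∀ a, (a = 1 ∨ a = -1) → |f (Function.update x k a)| ≤ C := by
      intro a ha
      refine ih _ fun i => ?_
      rcases eq_or_ne i k with rfl | hi
      · rcases ha with h | h <;> simp [h]
      · simp only [Function.update_of_ne hi]
        rcases hx i with h | h | ⟨hi', h⟩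
        · exact Or.inl h
        · exact Or.inr (Or.inl h)
        · exact Or.inr (Or.inr ⟨(Finset.mem_insert.mp hi').resolve_left hi, h⟩)
    rcases hx k with hk | hk | ⟨-, hk⟩
    · simpa [← hk] using hupdate (x k) (Or.inl hk)
    · simpa [← hk] using hupdate (x k) (Or.inr hk)
    · have h₁ := abs_le.mp (hupdate 1 (Or.inl rfl))
      have h₂ := abs_le.mp (hupdate (-1) (Or.inr rfl))
      have hmid := hf x k
      rw [← hk, Function.update_eq_self] at hmid
      exact abs_le.mpr ⟨by linarith, by linarith⟩

theorem half_add_half_sub_of_signs {a b : ℝ} (ha : a = 1 ∨ a = -1) (hb : b = 1 ∨ b = -1) :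
    ((a + b) / 2 = 0 ∧ ((a - b) / 2 = 1 ∨ (a - b) / 2 = -1)) ∨
      (((a + b) / 2 = 1 ∨ (a + b) / 2 = -1) ∧ (a - b) / 2 = 0) := by
  rcases ha with rfl | rfl <;> rcases hb with rfl | rfl <;> norm_num

section HomogeneousBound

variable {m : ℕ} {Q : QuadraticForm ℝ (Fin (m + 1) → ℝ)}
  (hQ : ∀ x : Fin m → ℝ, (∀ i, x i = 1 ∨ x i = -1 ∨ x i = 0) → |Q (Fin.cons 1 x)| ≤ 1)
include hQ

theorem abs_apply_cons_sign_le {t : ℝ} (ht : t = 1 ∨ t = -1) {x : Fin m → ℝ}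
    (hx : ∀ i, x i = 1 ∨ x i = -1 ∨ x i = 0) : |Q (Fin.cons t x)| ≤ 1 := by
  have htt : t * t = 1 := by rcases ht with rfl | rfl <;> norm_num
  have hcons : (Fin.cons t x : Fin (m + 1) → ℝ) = t • Fin.cons 1 (t • x) := by
    rw [← Matrix.vecCons, ← Matrix.vecCons, Matrix.smul_cons, smul_smul, htt, one_smul,
      smul_eq_mul, mul_one]
  rw [hcons, QuadraticMap.map_smul, htt, one_smul]
  refine hQ _ fun i => ?_
  rcases ht with rfl | rfl <;> rcases hx i with h | h | h <;> simp [h]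

theorem abs_apply_cons_zero_le {x : Fin m → ℝ} (hx : ∀ i, x i = 1 ∨ x i = -1 ∨ x i = 0) :
    |Q (Fin.cons 0 x)| ≤ 2 := by
  have hpar := Q.map_add_add_map_sub (Fin.cons 0 x) (Fin.cons 1 0)
  rw [← Matrix.vecCons, ← Matrix.vecCons, Matrix.cons_add_cons, Matrix.cons_sub_cons] at hpar
  simp only [zero_add, zero_sub, add_zero, sub_zero, two_nsmul, Matrix.vecCons] at hpar
  have h₁ := abs_le.mp (abs_apply_cons_sign_le hQ (Or.inl rfl) hx)
  have h₂ := abs_le.mp (abs_apply_cons_sign_le hQ (Or.inr rfl) hx)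
  have h₀ := abs_le.mp (hQ 0 fun i => Or.inr (Or.inr rfl))
  exact abs_le.mpr ⟨by linarith, by linarith⟩

theorem abs_associated_le_three {y z : Fin (m + 1) → ℝ} (hy : ∀ i, y i = 1 ∨ y i = -1)
    (hz : ∀ i, z i = 1 ∨ z i = -1) : |Q.associated y z| ≤ 3 := by
  set u : Fin (m + 1) → ℝ := fun i => (y i + z i) / 2
  set v : Fin (m + 1) → ℝ := fun i => (y i - z i) / 2
  have hsplit : ∀ i, (u i = 0 ∧ (v i = 1 ∨ v i = -1)) ∨ ((u i = 1 ∨ u i = -1) ∧ v i = 0) :=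
    fun i => half_add_half_sub_of_signs (hy i) (hz i)
  have hu : ∀ i, Fin.tail u i = 1 ∨ Fin.tail u i = -1 ∨ Fin.tail u i = 0 := by
    intro i; rcases hsplit i.succ with ⟨h, -⟩ | ⟨h | h, -⟩ <;> simp [Fin.tail, h]
  have hv : ∀ i, Fin.tail v i = 1 ∨ Fin.tail v i = -1 ∨ Fin.tail v i = 0 := by
    intro i; rcases hsplit i.succ with ⟨-, h | h⟩ | ⟨-, h⟩ <;> simp [Fin.tail, h]
  have hyz : y = u + v ∧ z = u - v := ⟨by ext; simp [u, v]; ring, by ext; simp [u, v]; ring⟩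
  rw [hyz.1, hyz.2, QuadraticMap.associated_add_sub, ← Fin.cons_self_tail u,
    ← Fin.cons_self_tail v]
  rcases hsplit 0 with ⟨hu₀, hv₀⟩ | ⟨hu₀, hv₀⟩
  · rw [hu₀]
    have hu₂ := abs_apply_cons_zero_le hQ hu
    have hv₁ := abs_apply_cons_sign_le hQ hv₀ hv
    exact (abs_sub _ _).trans (by linarith)
  · rw [hv₀]
    have hu₁ := abs_apply_cons_sign_le hQ hu₀ hu
    have hv₂ := abs_apply_cons_zero_le hQ hv
    exact (abs_sub _ _).trans (by linarith)

end HomogeneousBound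

noncomputable def quadraticHomogenization {R : Type*} [CommRing R] {n : ℕ} (c0 : R)
    (c1 : Fin n → R) (c2 : Fin n → Fin n → R) : QuadraticForm R (Fin (n + 1) → R) :=
  c0 • QuadraticMap.proj 0 0 + ∑ i, c1 i • QuadraticMap.proj 0 i.succ +
    ∑ i, ∑ j ∈ Finset.Ioi i, c2 i j • QuadraticMap.proj i.succ j.succ

section Homogenization

variable {R : Type*} [CommRing R] {n : ℕ} (c0 : R) (c1 : Fin n → R) (c2 : Fin n → Fin n → R)

theorem quadraticHomogenization_apply_cons_one (x : Fin n → R) :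
    quadraticHomogenization c0 c1 c2 (Fin.cons 1 x)
      = c0 + ∑ i, c1 i * x i + ∑ i, ∑ j ∈ Finset.Ioi i, c2 i j * x i * x j := by
  simp [quadraticHomogenization, QuadraticMap.proj_apply, mul_assoc]

theorem quadraticHomogenization_apply_single_succ (k : Fin n) :
    quadraticHomogenization c0 c1 c2 (Pi.single k.succ 1) = 0 := by
  simp +contextual [quadraticHomogenization, QuadraticMap.proj_apply, Pi.single_apply, ne_of_lt]

end Homogenization

theorem degree_two_to_bilinear (n : ℕ)
    (c0 : ℝ) (c1 : Fin n → ℝ) (c2 : Fin n → Fin n → ℝ) (p : (Fin n → ℝ) → ℝ)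
    (hp : ∀ x : Fin n → ℝ,
      p x = c0 + ∑ i, c1 i * x i + ∑ i, ∑ j ∈ Finset.Ioi i, c2 i j * x i * x j)
    (hbound : ∀ x : Fin n → ℝ, (∀ i, x i = 1 ∨ x i = -1) → |p x| ≤ 1) :
    ∃ M : Matrix (Fin (n + 1)) (Fin (n + 1)) ℝ,
      (∀ x : Fin n → ℝ,
        (∑ i, ∑ j, (Fin.cons 1 x : Fin (n + 1) → ℝ) i * M i j * (Fin.cons 1 x : Fin (n + 1) → ℝ) j) = p x) ∧
      (∀ y z : Fin (n + 1) → ℝ, (∀ i, y i = 1 ∨ y i = -1) → (∀ i, z i = 1 ∨ z i = -1) →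
        |∑ i, ∑ j, y i * M i j * z j| ≤ 3) := by
  set Q := quadraticHomogenization c0 c1 c2
  have hQp : ∀ x, Q (Fin.cons 1 x) = p x := fun x => by
    rw [hp, quadraticHomogenization_apply_cons_one]
  have hmid : ∀ x k, p (Function.update x k 1) + p (Function.update x k (-1))
      = 2 * p (Function.update x k 0) := by
    intro x k
    simp only [← hQp, Fin.cons_update, two_mul]
    simpa only [two_nsmul] using Q.map_update_one_add_map_update_neg_one _ _
      (quadraticHomogenization_apply_single_succ c0 c1 c2 k)
  have hQ : ∀ x : Fin n → ℝ, (∀ i, x i = 1 ∨ x i = -1 ∨ x i = 0) → |Q (Fin.cons 1 x)| ≤ 1 :=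
    fun x hx => hQp x ▸ abs_le_of_midpoint_of_abs_le_on_signs hmid hbound x hx
  refine ⟨Q.toMatrix', fun x => ?_, fun y z hy hz => ?_⟩
  · rw [QuadraticForm.sum_mul_toMatrix'_mul, QuadraticMap.associated_eq_self_apply, hQp]
  · rw [QuadraticForm.sum_mul_toMatrix'_mul]
    exact abs_associated_le_three hQ hy hz
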